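/- arXiv:1907.03993 — 2 statements merged into one kernel-verified Lean document; each statement's English description precedes it below -/
import Mathlib

section
/- Let a > b ≥ 2 and let B = [[(a-1)/(a+b), 2a/(a+b)], [b/(a+b), (ab-a-b)/(a(a+b))]] with largest eigenvalue λ1. Then B has an eigenvector for λ1 of the form (1, k) with 0 < k < 1. -/
/-!
For a real `2 × 2` matrix `!![p, q; r, s]` with `q, r > 0`, the characteristic polynomial
`f x = (x - p) * (x - s) - q * r` is invariant under `x ↦ p + s - x`, so the largest root `λ`
comes with a second root `μ = p + s - λ ≤ λ`. From `f p = -q r < 0` we get `μ < p < λ`, and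
`f (p + q) = q (p - s + q - r) > 0` then forces `λ < p + q`. Hence `k = (λ - p) / q ∈ (0, 1)`,
and `(1, k)` is an eigenvector for `λ`.
-/

theorem lt_and_lt_add_of_max_root_quadratic {p q r s l : ℝ} (hq : 0 < q) (hr : 0 < r)
    (hqr : r < p - s + q) (hl : (l - p) * (l - s) - q * r = 0) (hmax : p + s - l ≤ l) :
    p < l ∧ l < p + q := by
  have hp : p < l := by nlinarith
  exact ⟨hp, by nlinarith⟩

namespace Matrix

theorem isRoot_charpoly_fin_two_iff {R : Type*} [CommRing R] [Nontrivial R]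
    (A : Matrix (Fin 2) (Fin 2) R) (x : R) :
    A.charpoly.IsRoot x ↔ (x - A 0 0) * (x - A 1 1) - A 0 1 * A 1 0 = 0 := by
  rw [charpoly_fin_two, trace_fin_two, det_fin_two]
  simp only [Polynomial.IsRoot.def, Polynomial.eval_add, Polynomial.eval_sub,
    Polynomial.eval_mul, Polynomial.eval_pow, Polynomial.eval_X, Polynomial.eval_C]
  constructor <;> intro h <;> linear_combination h

theorem mulVec_vecCons_one_eq_smul_iff {R : Type*} [CommRing R]
    (A : Matrix (Fin 2) (Fin 2) R) (k c : R) :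
    A *ᵥ ![1, k] = c • ![1, k] ↔ A 0 0 + A 0 1 * k = c ∧ A 1 0 + A 1 1 * k = c * k := by
  simp [funext_iff, Fin.forall_fin_two]

theorem exists_eigenvector_one_of_max_root_fin_two (A : Matrix (Fin 2) (Fin 2) ℝ)
    (h01 : 0 < A 0 1) (h10 : 0 < A 1 0) (hlt : A 1 0 < A 0 0 - A 1 1 + A 0 1)
    (l : ℝ) (hroot : A.charpoly.IsRoot l) (hmax : ∀ μ : ℝ, A.charpoly.IsRoot μ → μ ≤ l) :
    ∃ k : ℝ, 0 < k ∧ k < 1 ∧ A *ᵥ ![1, k] = l • ![1, k] := by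
  rw [isRoot_charpoly_fin_two_iff] at hroot
  have hconj : A.charpoly.IsRoot (A 0 0 + A 1 1 - l) := by
    rw [isRoot_charpoly_fin_two_iff]; linear_combination hroot
  obtain ⟨hpl, hlq⟩ := lt_and_lt_add_of_max_root_quadratic h01 h10 hlt hroot (hmax _ hconj)
  refine ⟨(l - A 0 0) / A 0 1, div_pos (by linarith) h01,
    (div_lt_one h01).mpr (by linarith), ?_⟩
  rw [mulVec_vecCons_one_eq_smul_iff]
  constructor
  · field_simp; ring
  · field_simp; linear_combination -hroot

end Matrix

theorem stmt_15 (a b : ℕ) (hb : 2 ≤ b) (hab : b < a)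
    (B : Matrix (Fin 2) (Fin 2) ℝ)
    (hB : B = !![((a:ℝ)-1)/(a+b), 2*a/(a+b);
                 (b:ℝ)/(a+b), ((a:ℝ)*b - a - b)/(a*(a+b))])
    (lam1 : ℝ) (hroot : B.charpoly.IsRoot lam1)
    (hmax : ∀ μ : ℝ, B.charpoly.IsRoot μ → μ ≤ lam1) :
    ∃ k : ℝ, 0 < k ∧ k < 1 ∧ B.mulVec ![1, k] = lam1 • ![1, k] := by
  have hb' : (0 : ℝ) < b := by exact_mod_cast (by omega : 0 < b)
  have hab' : (b : ℝ) < a := by exact_mod_cast hab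
  have ha : (0 : ℝ) < a := hb'.trans hab'
  refine B.exists_eigenvector_one_of_max_root_fin_two ?_ ?_ ?_ lam1 hroot hmax <;>
    simp only [hB, Matrix.of_apply, Matrix.cons_val', Matrix.cons_val_zero, Matrix.cons_val_one,
      Matrix.empty_val', Matrix.cons_val_fin_one]
  · positivity
  · positivity
  · rw [← sub_pos]
    have hdiff : ((a:ℝ)-1)/(a+b) - ((a:ℝ)*b - a - b)/(a*(a+b)) + 2*a/(a+b) - b/(a+b)
        = (a * (3 * a - 2 * b) + b) / (a * (a + b)) := by
      field_simp; ring
    rw [hdiff]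
    have h3 : (0:ℝ) < 3 * a - 2 * b := by linarith
    positivity
end

section
/- Let a > b ≥ 2 and define the sequence of vectors W_n ∈ ℝ³ by W_0 = (1,1,1) and W_{n+1} = A W_n where A is the matrix [[(a-1)/(a+b), 2a/(a+b), 0], [b/(a+b), (ab-a-b)/(a(a+b)), 1/(a+b)], [0, 0, 1/a]]. Then for all n, all coordinates of W_n are positive and W_n satisfies (W_n)_1 ≥ (W_n)_2 ≥ (W_n)_3. -/
/-!
The cone `{d | d 0 ≥ d 1 ≥ d 2 > 0}` is invariant under `A = stepMatrix a b`. Clearing the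
common denominator `a (a + b)`, `A` is a positive multiple of a polynomial matrix, and the
invariance of the cone under that matrix reduces to three polynomial inequalities, which hold
because `a ≥ b + 1` and `a b ≥ a + b`. The theorem follows by induction from `W 0 = (1, 1, 1)`.
-/

open Matrix

noncomputable def stepMatrix (a b : ℝ) : Matrix (Fin 3) (Fin 3) ℝ :=
  !![(a - 1) / (a + b), 2 * a / (a + b), 0;
     b / (a + b), (a * b - a - b) / (a * (a + b)), 1 / (a + b);
     0, 0, 1 / a]

def stepNumerator (a b : ℝ) : Matrix (Fin 3) (Fin 3) ℝ :=
  !![a * (a - 1), 2 * a ^ 2, 0;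
     a * b, a * b - a - b, a;
     0, 0, a + b]

lemma stepMatrix_eq_smul {a b : ℝ} (ha : a ≠ 0) (hab : a + b ≠ 0) :
    stepMatrix a b = (a * (a + b))⁻¹ • stepNumerator a b := by
  ext i j
  fin_cases i <;> fin_cases j <;> simp [stepMatrix, stepNumerator] <;> field_simp

def IsPosAntitone (d : Fin 3 → ℝ) : Prop := 0 < d 2 ∧ d 2 ≤ d 1 ∧ d 1 ≤ d 0

lemma IsPosAntitone.smul {d : Fin 3 → ℝ} (hd : IsPosAntitone d) {c : ℝ} (hc : 0 < c) :
    IsPosAntitone (c • d) := by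
  obtain ⟨h2, h21, h10⟩ := hd
  simp only [IsPosAntitone, Pi.smul_apply, smul_eq_mul]
  exact ⟨mul_pos hc h2, by gcongr, by gcongr⟩

lemma IsPosAntitone.stepNumerator_mulVec {a b : ℝ} (hb : 2 ≤ b) (hab : b + 1 ≤ a)
    {d : Fin 3 → ℝ} (hd : IsPosAntitone d) : IsPosAntitone (stepNumerator a b *ᵥ d) := by
  obtain ⟨h2, h21, h10⟩ := hd
  have ha : 0 < a := by linarith
  simp only [IsPosAntitone, mulVec, dotProduct, stepNumerator, of_apply, cons_val',
    cons_val_fin_one, cons_val, cons_val_one, Fin.sum_univ_three, cons_val_zero, zero_mul,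
    add_zero, zero_add]
  have h0 : 0 < d 0 := by linarith
  refine ⟨by positivity, ?_, ?_⟩
  · nlinarith [mul_le_mul_of_nonneg_left (h21.trans h10) (by positivity : 0 ≤ a * b),
      mul_nonneg (by nlinarith : 0 ≤ a * b - a - b) h0.le,
      mul_nonneg (by nlinarith : 0 ≤ b * (a - 1)) h2.le]
  · nlinarith [mul_nonneg (by nlinarith : 0 ≤ a * (a - 1 - b)) h0.le,
      mul_le_mul_of_nonneg_left h21 ha.le,
      mul_nonneg (by nlinarith : 0 ≤ 2 * a ^ 2 - a * b + b) (h2.trans_le h21).le]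

lemma IsPosAntitone.stepMatrix_mulVec {a b : ℝ} (hb : 2 ≤ b) (hab : b + 1 ≤ a)
    {d : Fin 3 → ℝ} (hd : IsPosAntitone d) : IsPosAntitone (stepMatrix a b *ᵥ d) := by
  have ha : 0 < a := by linarith
  have hapb : 0 < a + b := by linarith
  rw [stepMatrix_eq_smul ha.ne' hapb.ne', smul_mulVec]
  exact (hd.stepNumerator_mulVec hb hab).smul (by positivity)

theorem stmt_18 (a b : ℕ) (hb : 2 ≤ b) (hab : b < a)
    (W : ℕ → (Fin 3 → ℝ))
    (hW0 : W 0 = ![1, 1, 1])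
    (hW : ∀ n, W (n+1) =
      (!![((a:ℝ)-1)/(a+b), 2*a/(a+b), 0;
          (b:ℝ)/(a+b), ((a:ℝ)*b - a - b)/(a*(a+b)), 1/(a+b);
          0, 0, 1/(a:ℝ)]).mulVec (W n)) :
    ∀ n, (0 < W n 0 ∧ 0 < W n 1 ∧ 0 < W n 2) ∧ (W n 1 ≤ W n 0 ∧ W n 2 ≤ W n 1) := by
  have hb' : (2 : ℝ) ≤ b := by exact_mod_cast hb
  have hab' : (b : ℝ) + 1 ≤ a := by exact_mod_cast hab
  have hcone : ∀ n, IsPosAntitone (W n) := by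
    intro n
    induction n with
    | zero => simp [hW0, IsPosAntitone]
    | succ n ih => exact hW n ▸ ih.stepMatrix_mulVec hb' hab'
  intro n
  obtain ⟨h2, h21, h10⟩ := hcone n
  exact ⟨⟨by linarith, by linarith, h2⟩, h10, h21⟩
end
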